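/- Let x ∈ W_n and let 1 ≤ i ≤ n−2. Then x ∈ D_i(W_n) if and only if t x ∈ D_i(W_n); and if this is the case, then γ_i(t x) = t γ_i(x). -/

import Mathlib

/-!
Common setup: the Weyl group `W n` of type `B_n`, realized as the group of
permutations `w` of `I_n = {±1, …, ±n}` (inside `Equiv.Perm ℤ`, fixing every
integer of absolute value `> n`) such that `w (-i) = - w i` for all `i`.
-/

namespace TypeB

/-- The generator `t = (1, -1)`. -/
def t : Equiv.Perm ℤ := Equiv.swap 1 (-1)

/-- The generator `s i = (i, i+1)(-i, -(i+1))` (meaningful for `1 ≤ i`). -/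
def s (i : ℕ) : Equiv.Perm ℤ :=
  Equiv.swap (i : ℤ) ((i : ℤ) + 1) * Equiv.swap (-(i : ℤ)) (-((i : ℤ) + 1))

/-- The generating set `S_n = {t, s_1, …, s_{n-1}}`. -/
def gens (n : ℕ) : Set (Equiv.Perm ℤ) :=
  {t} ∪ {x | ∃ i : ℕ, 1 ≤ i ∧ i < n ∧ x = s i}

/-- The Weyl group `W_n` of type `B_n`, as a subgroup of `Equiv.Perm ℤ`:
permutations `w` with `w (-i) = - (w i)` for all `i` and fixing all `i` with `|i| > n`. -/
def W (n : ℕ) : Subgroup (Equiv.Perm ℤ) where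
  carrier := {w | (∀ i : ℤ, w (-i) = - w i) ∧ ∀ i : ℤ, (n : ℤ) < |i| → w i = i}
  one_mem' := ⟨fun _ => rfl, fun _ _ => rfl⟩
  mul_mem' := by
    rintro u v ⟨hu1, hu2⟩ ⟨hv1, hv2⟩
    refine ⟨fun i => ?_, fun i hi => ?_⟩
    · simp only [Equiv.Perm.mul_apply, hv1, hu1]
    · simp only [Equiv.Perm.mul_apply, hv2 i hi, hu2 i hi]
  inv_mem' := by
    rintro u ⟨hu1, hu2⟩
    refine ⟨fun i => ?_, fun i hi => ?_⟩
    · apply u.injective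
      rw [Equiv.Perm.inv_def, Equiv.apply_symm_apply, hu1, Equiv.apply_symm_apply]
    · apply u.injective
      rw [Equiv.Perm.inv_def, Equiv.apply_symm_apply, hu2 i hi]

/-- The length of `w` with respect to the generating set `S_n`. -/
noncomputable def len (n : ℕ) (w : Equiv.Perm ℤ) : ℕ :=
  sInf {k | ∃ l : List (Equiv.Perm ℤ), (∀ x ∈ l, x ∈ gens n) ∧ l.prod = w ∧ l.length = k}

/-- `l` is a reduced expression for `w` with respect to `S_n`. -/
def IsReduced (n : ℕ) (w : Equiv.Perm ℤ) (l : List (Equiv.Perm ℤ)) : Prop :=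
  (∀ x ∈ l, x ∈ gens n) ∧ l.prod = w ∧ l.length = len n w

/-- `ℓ_t w`: the number of occurrences of `t` in a reduced expression of `w`
(independent of the chosen reduced expression). -/
noncomputable def lent (n : ℕ) (w : Equiv.Perm ℤ) : ℕ :=
  letI : DecidableEq (Equiv.Perm ℤ) := Classical.decEq _
  sInf {m | ∃ l, IsReduced n w l ∧ l.count t = m}

/-- `r 1 = t` and `r (i+1) = s i * r i`. -/
def r : ℕ → Equiv.Perm ℤ
  | 0 => 1
  | 1 => t
  | (i + 2) => s (i + 1) * r (i + 1)

/-- `t_1 = t` and `t_{i+1} = s_i * t_i * s_i`. -/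
def tperm : ℕ → Equiv.Perm ℤ
  | 0 => 1
  | 1 => t
  | (i + 2) => s (i + 1) * tperm (i + 1) * s (i + 1)

/-- `a l = r 1 * r 2 * ⋯ * r l`, with `a 0 = 1`. -/
def a : ℕ → Equiv.Perm ℤ
  | 0 => 1
  | (l + 1) => a l * r (l + 1)

/-- The symmetric group `𝔖_n`: the subgroup generated by `s_1, …, s_{n-1}`. -/
def Sym (n : ℕ) : Subgroup (Equiv.Perm ℤ) :=
  Subgroup.closure {x | ∃ i : ℕ, 1 ≤ i ∧ i < n ∧ x = s i}

/-- The parabolic subgroup `𝔖_{l,n-l}`: generated by `{s_1, …, s_{n-1}} \ {s_l}`. -/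
def SymP (n l : ℕ) : Subgroup (Equiv.Perm ℤ) :=
  Subgroup.closure {x | ∃ i : ℕ, 1 ≤ i ∧ i < n ∧ i ≠ l ∧ x = s i}

/-- `Y_{l,n-l}`: elements of `𝔖_n` of minimal length in their coset `w 𝔖_{l,n-l}`. -/
def Y (n l : ℕ) : Set (Equiv.Perm ℤ) :=
  {w | w ∈ Sym n ∧ ∀ u ∈ SymP n l, len n w ≤ len n (w * u)}

/-- The subgroup `𝔖_{[i,j]}` generated by `s_i, …, s_{j-1}`. -/
def SymI (i j : ℕ) : Subgroup (Equiv.Perm ℤ) :=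
  Subgroup.closure {x | ∃ k : ℕ, i ≤ k ∧ k < j ∧ x = s k}

/-- The function reversing the interval `[i,j]` (and `[-j,-i]`), for `1 ≤ i`. -/
def revFun (i j : ℤ) : ℤ → ℤ := fun k =>
  if 1 ≤ i ∧ i ≤ k ∧ k ≤ j then i + j - k
  else if 1 ≤ i ∧ -j ≤ k ∧ k ≤ -i then -(i + j) - k
  else k

lemma revFun_involutive (i j : ℤ) : Function.Involutive (revFun i j) := by
  intro k
  unfold revFun
  split_ifs <;> omega

/-- `σ_{[i,j]}`: the longest element of `𝔖_{[i,j]}`, i.e. the order-reversing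
permutation of the interval `[i,j]` (extended to `I_n` by `w(-k) = -w(k)`). -/
def sigmaI (i j : ℕ) : Equiv.Perm ℤ := (revFun_involutive (i : ℤ) (j : ℤ)).toPerm

/-- `σ_{l,n-l}`: the longest element of `𝔖_{l,n-l} = 𝔖_{[1,l]} × 𝔖_{[l+1,n]}`. -/
def sigmaLL (n l : ℕ) : Equiv.Perm ℤ := sigmaI 1 l * sigmaI (l + 1) n

/-- The function negating all `k` with `|k| ≤ n`. -/
def negnFun (n : ℤ) : ℤ → ℤ := fun k => if -n ≤ k ∧ k ≤ n then -k else k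

lemma negnFun_involutive (n : ℤ) : Function.Involutive (negnFun n) := by
  intro k
  unfold negnFun
  split_ifs <;> omega

/-- `w_n`: the longest element of `W_n`; as a permutation, `w_n i = -i` for `|i| ≤ n`. -/
def wlong (n : ℕ) : Equiv.Perm ℤ := (negnFun_involutive (n : ℤ)).toPerm

/-- `c_I = s_{i_1} s_{i_2} ⋯ s_{i_k}` for `I = {i_1 < i_2 < ⋯ < i_k}`. -/
def cElt (I : Finset ℕ) : Equiv.Perm ℤ := ((I.sort (· ≤ ·)).map s).prod

/-- `d_I = s_{i_k} ⋯ s_{i_2} s_{i_1}` for `I = {i_1 < i_2 < ⋯ < i_k}`. -/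
def dElt (I : Finset ℕ) : Equiv.Perm ℤ := (((I.sort (· ≤ ·)).map s).reverse).prod

/-- `X_n^{(m)}`: elements of `W_n` of minimal length in their coset `w W_m`. -/
def X (n m : ℕ) : Set (Equiv.Perm ℤ) :=
  {w | w ∈ W n ∧ ∀ u ∈ W m, len n w ≤ len n (w * u)}

/-- Bruhat order: `x ≤ y` iff some reduced expression of `y` contains a subword
which is a reduced expression of `x`. -/
def BruhatLE (n : ℕ) (x y : Equiv.Perm ℤ) : Prop :=
  ∃ ly, IsReduced n y ly ∧ ∃ lx, lx.Sublist ly ∧ IsReduced n x lx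

/-- Strict Bruhat order. -/
def BruhatLT (n : ℕ) (x y : Equiv.Perm ℤ) : Prop := BruhatLE n x y ∧ x ≠ y

/-- `D_i(W_n)`: the set of `x` such that exactly one of `s_i, s_{i+1}` is a
(right) descent of `x`. -/
def Dset (n i : ℕ) : Set (Equiv.Perm ℤ) :=
  {x | Xor' (len n (x * s i) < len n x) (len n (x * s (i + 1)) < len n x)}

open Classical in
/-- `γ_i x`: the unique element of `{x s_i, x s_{i+1}} ∩ D_i(W_n)` (for `x ∈ D_i(W_n)`). -/
noncomputable def gamma (n i : ℕ) (x : Equiv.Perm ℤ) : Equiv.Perm ℤ :=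
  if x * s i ∈ Dset n i then x * s i else x * s (i + 1)

/-- `E_m^{(r)}`: the set of `w ∈ W_m` such that `|w 1| > |w i|` for `2 ≤ i ≤ r+2`
and `(w 2, …, w (r+2))` is a shuffle of a positive decreasing sequence and a
negative increasing sequence. -/
def E (m ρ : ℕ) : Set (Equiv.Perm ℤ) :=
  {w | w ∈ W m ∧ (∀ i : ℕ, 2 ≤ i → i ≤ ρ + 2 → |w (i : ℤ)| < |w (1 : ℤ)|) ∧
    ∀ i j : ℕ, 2 ≤ i → i < j → j ≤ ρ + 2 →
      (0 < w (i : ℤ) → 0 < w (j : ℤ) → w (j : ℤ) < w (i : ℤ)) ∧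
      (w (i : ℤ) < 0 → w (j : ℤ) < 0 → w (i : ℤ) < w (j : ℤ))}

/-- The product `r_{i_1} ⋯ r_{i_l}` for a sequence `i : Fin l → ℕ`. -/
def prodR {l : ℕ} (i : Fin l → ℕ) : Equiv.Perm ℤ := (List.ofFn fun k => r (i k)).prod

/-- `(l, α, β, σ)` is a decomposition of `w` as in the decomposition lemma:
`l ≤ n`, `α, β ∈ Y_{l,n-l}`, `σ ∈ 𝔖_{l,n-l}` and `w = α a_l σ β⁻¹`. -/
def IsDecomp (n : ℕ) (w : Equiv.Perm ℤ) (l : ℕ) (α β σ : Equiv.Perm ℤ) : Prop :=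
  l ≤ n ∧ α ∈ Y n l ∧ β ∈ Y n l ∧ σ ∈ SymP n l ∧ w = α * a l * σ * β⁻¹


/-!
View `w ∈ W n` as a permutation of `[-n, n]`. Its length is the number of positive roots of
`B_n` that it makes negative, i.e. the number of its inversions `(a, b)` with `0 < a + b`: right
multiplication by `t` or by `s_j` changes this count by exactly one, in a direction read off
from the sign of `w 1`, resp. the order of `w j` and `w (j + 1)`. So `s_j` is a right descent of
`w` iff `w (j + 1) < w j`. Left multiplication by `t` only exchanges the values `1` and `-1`,
which cannot change the relative order of `w j` and `w (j + 1)` (nonzero and not opposite), so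
`w` and `t w` have the same right descents among the `s_j`; both claims follow.
-/

open Finset

lemma t_apply (k : ℤ) : t k = if k = 1 then -1 else if k = -1 then 1 else k := by
  simp [t, Equiv.swap_apply_def]

lemma s_apply {j : ℕ} (hj : 1 ≤ j) (k : ℤ) :
    s j k = if k = (j : ℤ) then (j : ℤ) + 1 else if k = (j : ℤ) + 1 then (j : ℤ)
      else if k = -(j : ℤ) then -((j : ℤ) + 1) else if k = -((j : ℤ) + 1) then -(j : ℤ) else k := by
  simp only [s, Equiv.Perm.mul_apply, Equiv.swap_apply_def]
  split_ifs <;> omega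

lemma t_mul_self : t * t = 1 := by
  simp [t]

lemma s_mul_self {j : ℕ} (hj : 1 ≤ j) : s j * s j = 1 := by
  ext k
  simp only [Equiv.Perm.mul_apply, Equiv.Perm.one_apply, s_apply hj]
  split_ifs <;> omega

lemma t_mem_W {n : ℕ} (hn : 1 ≤ n) : t ∈ W n := by
  refine ⟨fun k => ?_, fun k hk => ?_⟩ <;> simp only [t_apply]
  · split_ifs <;> omega
  · have := lt_abs.mp hk
    split_ifs <;> omega

lemma s_mem_W {n j : ℕ} (hj : 1 ≤ j) (hjn : j + 1 ≤ n) : s j ∈ W n := by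
  refine ⟨fun k => ?_, fun k hk => ?_⟩ <;> simp only [s_apply hj]
  · split_ifs <;> omega
  · have := lt_abs.mp hk
    split_ifs <;> omega

lemma gens_subset_W {n : ℕ} (hn : 1 ≤ n) : gens n ⊆ W n := by
  rintro g (rfl | ⟨j, hj, hjn, rfl⟩)
  exacts [t_mem_W hn, s_mem_W hj hjn]

lemma mul_self_of_mem_gens {n : ℕ} {g : Equiv.Perm ℤ} (hg : g ∈ gens n) : g * g = 1 := by
  rcases hg with rfl | ⟨j, hj, -, rfl⟩
  exacts [t_mul_self, s_mul_self hj]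

section W

variable {n : ℕ} {w : Equiv.Perm ℤ}

lemma apply_neg_of_mem_W (hw : w ∈ W n) (k : ℤ) : w (-k) = -w k := hw.1 k

lemma apply_zero_of_mem_W (hw : w ∈ W n) : w 0 = 0 := by
  have := apply_neg_of_mem_W hw 0
  rw [neg_zero] at this
  omega

lemma apply_ne_zero_of_mem_W (hw : w ∈ W n) {k : ℤ} (hk : k ≠ 0) : w k ≠ 0 :=
  fun h => hk (w.injective (h.trans (apply_zero_of_mem_W hw).symm))

lemma apply_ne_neg_apply_of_mem_W (hw : w ∈ W n) {k l : ℤ} (hkl : k ≠ -l) : w k ≠ -w l := by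
  rw [← apply_neg_of_mem_W hw]
  exact w.injective.ne hkl

lemma apply_mem_Icc_of_mem_W (hw : w ∈ W n) {k : ℤ} (hk : k ∈ Icc (-n : ℤ) n) :
    w k ∈ Icc (-n : ℤ) n := by
  by_contra h
  have hfix : w⁻¹ (w k) = w k := (inv_mem hw).2 _ (by rw [mem_Icc, ← abs_le] at h; omega)
  rw [Equiv.Perm.inv_def, Equiv.symm_apply_apply] at hfix
  exact h (hfix ▸ hk)

end W

noncomputable def inversions (n : ℕ) (w : Equiv.Perm ℤ) : Finset (ℤ × ℤ) :=
  (Icc (-n : ℤ) n ×ˢ Icc (-n : ℤ) n).filter fun p => p.1 < p.2 ∧ w p.2 < w p.1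

section Inversions

variable {n : ℕ} {w g : Equiv.Perm ℤ}

lemma mem_inversions {p : ℤ × ℤ} : p ∈ inversions n w ↔
    p.1 ∈ Icc (-n : ℤ) n ∧ p.2 ∈ Icc (-n : ℤ) n ∧ p.1 < p.2 ∧ w p.2 < w p.1 := by
  simp only [inversions, mem_filter, mem_product, and_assoc]

lemma card_inversions_mul (hg : g ∈ W n) (hgg : g * g = 1)
    (hw : ∀ p ∈ inversions n g, w p.1 < w p.2) :
    #(inversions n (w * g)) = #(inversions n w) + #(inversions n g) := by
  have hgg' (k : ℤ) : g (g k) = k := by rw [← Equiv.Perm.mul_apply, hgg, Equiv.Perm.one_apply]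
  -- `p ↦ (g p.1, g p.2)` matches the remaining inversions of `w * g` with those of `w`, and
  -- each inversion `(a, b)` of `g` is one of `w * g` since `(g b, g a)` is again one of `g`.
  have hsub : inversions n g ⊆ inversions n (w * g) := by
    intro p hp
    obtain ⟨h1, h2, hlt, hglt⟩ := mem_inversions.mp hp
    refine mem_inversions.mpr ⟨h1, h2, hlt, hw (g p.2, g p.1) (mem_inversions.mpr ?_)⟩
    exact ⟨apply_mem_Icc_of_mem_W hg h2, apply_mem_Icc_of_mem_W hg h1, hglt,
      by simpa [hgg'] using hlt⟩
  have hrest : #(inversions n (w * g) \ inversions n g) = #(inversions n w) := by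
    refine card_nbij' (fun p => (g p.1, g p.2)) (fun p => (g p.1, g p.2)) ?_ ?_ ?_ ?_
    · rintro ⟨a, b⟩ hp
      simp only [coe_sdiff, Set.mem_sdiff, mem_coe, mem_inversions, Equiv.Perm.mul_apply] at hp ⊢
      obtain ⟨⟨ha, hb, hab, hwab⟩, hgab⟩ := hp
      have : g a ≠ g b := g.injective.ne hab.ne
      refine ⟨apply_mem_Icc_of_mem_W hg ha, apply_mem_Icc_of_mem_W hg hb, ?_, hwab⟩
      by_contra
      exact hgab ⟨ha, hb, hab, by omega⟩
    · rintro ⟨a, b⟩ hp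
      simp only [coe_sdiff, Set.mem_sdiff, mem_coe, mem_inversions, Equiv.Perm.mul_apply,
        hgg'] at hp ⊢
      obtain ⟨ha, hb, hab, hwab⟩ := hp
      have hgab : ¬ g b < g a := fun h =>
        (hw (a, b) (mem_inversions.mpr ⟨ha, hb, hab, h⟩)).not_gt hwab
      have : g a ≠ g b := g.injective.ne hab.ne
      exact ⟨⟨apply_mem_Icc_of_mem_W hg ha, apply_mem_Icc_of_mem_W hg hb, by omega, hwab⟩,
        fun h => hab.not_gt h.2.2.2⟩
    · intro p _
      simp [hgg']
    · intro p _
      simp [hgg']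
  rw [← card_sdiff_add_card_eq_card hsub, hrest]

lemma inversions_t (hn : 1 ≤ n) : inversions n t = {(-1, 0), (0, 1), (-1, 1)} := by
  ext ⟨a, b⟩
  simp only [mem_inversions, mem_Icc, t_apply, mem_insert, mem_singleton, Prod.mk.injEq]
  split_ifs <;> omega

lemma inversions_s {j : ℕ} (hj : 1 ≤ j) (hjn : j + 1 ≤ n) :
    inversions n (s j) = {((j : ℤ), (j : ℤ) + 1), (-((j : ℤ) + 1), -(j : ℤ))} := by
  ext ⟨a, b⟩
  simp only [mem_inversions, mem_Icc, s_apply hj, mem_insert, mem_singleton, Prod.mk.injEq]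
  split_ifs <;> omega

end Inversions

noncomputable def negCount (n : ℕ) (w : Equiv.Perm ℤ) : ℕ :=
  #((Icc (1 : ℤ) n).filter fun k => w k < 0)

/-- The pairs `a < b` with `0 < a + b` index the positive roots `e_b - e_a` of `B_n`
(with `e_0 = 0` and `e_{-k} = -e_k`), so `lengthB n w` counts the positive roots sent to
negative ones by `w`. -/
noncomputable def lengthB (n : ℕ) (w : Equiv.Perm ℤ) : ℕ :=
  #((inversions n w).filter fun p => 0 < p.1 + p.2)

section Statistics

variable {n : ℕ} {w : Equiv.Perm ℤ}

lemma lengthB_one : lengthB n 1 = 0 := by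
  rw [lengthB, card_eq_zero, filter_eq_empty_iff]
  intro p hp
  obtain ⟨-, -, hlt, hgt⟩ := mem_inversions.mp hp
  simp only [Equiv.Perm.one_apply] at hgt
  omega

/-- The inversions come in mirror pairs `(a, b) ↔ (-b, -a)`, except the self-mirror ones
`(-k, k)`, which are the `k > 0` with `w k < 0`. -/
lemma card_inversions_eq_two_mul_lengthB_add_negCount (hw : w ∈ W n) :
    #(inversions n w) = 2 * lengthB n w + negCount n w := by
  have hsplit := card_filter_add_card_filter_not (s := inversions n w) (fun p => 0 < p.1 + p.2)
  have hsplit' := card_filter_add_card_filter_not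
    (s := (inversions n w).filter fun p => ¬ 0 < p.1 + p.2) (fun p => p.1 + p.2 < 0)
  have hmirror : #(((inversions n w).filter fun p => ¬ 0 < p.1 + p.2).filter
      fun p => p.1 + p.2 < 0) = lengthB n w := by
    refine card_nbij' (fun p => (-p.2, -p.1)) (fun p => (-p.2, -p.1)) ?_ ?_ ?_ ?_
    · rintro ⟨a, b⟩ hp
      simp only [mem_coe, mem_filter, mem_inversions, mem_Icc,
        apply_neg_of_mem_W hw] at hp ⊢
      omega
    · rintro ⟨a, b⟩ hp
      simp only [mem_coe, mem_filter, mem_inversions, mem_Icc,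
        apply_neg_of_mem_W hw] at hp ⊢
      omega
    · intro p _
      simp
    · intro p _
      simp
  have hdiag : #(((inversions n w).filter fun p => ¬ 0 < p.1 + p.2).filter
      fun p => ¬ p.1 + p.2 < 0) = negCount n w := by
    refine card_nbij' Prod.snd (fun k => (-k, k)) ?_ ?_ ?_ ?_
    · rintro ⟨a, b⟩ hp
      simp only [mem_coe, mem_filter, mem_inversions, mem_Icc] at hp ⊢
      have hab : a = -b := by omega
      subst hab
      rw [apply_neg_of_mem_W hw] at hp
      omega
    · intro k hk
      simp only [mem_coe, mem_filter, mem_inversions, mem_Icc,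
        apply_neg_of_mem_W hw] at hk ⊢
      omega
    · rintro ⟨a, b⟩ hp
      simp only [mem_coe, mem_filter, mem_inversions, mem_Icc] at hp
      simp only [Prod.mk.injEq, and_true]
      omega
    · intro k _
      rfl
  have hpos : #((inversions n w).filter fun p => 0 < p.1 + p.2) = lengthB n w := rfl
  omega

lemma negCount_mul_s {j : ℕ} (hj : 1 ≤ j) (hjn : j + 1 ≤ n) :
    negCount n (w * s j) = negCount n w := by
  unfold negCount
  refine card_nbij' (s j) (s j) ?_ ?_ ?_ ?_
  · intro k hk
    rw [mem_coe, mem_filter, mem_Icc] at hk ⊢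
    simp only [Equiv.Perm.mul_apply] at hk ⊢
    rw [s_apply hj] at hk ⊢
    split_ifs at hk ⊢ <;> omega
  · intro k hk
    rw [mem_coe, mem_filter, mem_Icc] at hk ⊢
    simp only [Equiv.Perm.mul_apply] at hk ⊢
    rw [← Equiv.Perm.mul_apply (s j), s_mul_self hj, Equiv.Perm.one_apply, s_apply hj]
    split_ifs <;> omega
  · intro k _
    simp [← Equiv.Perm.mul_apply, s_mul_self hj]
  · intro k _
    simp [← Equiv.Perm.mul_apply, s_mul_self hj]

lemma negCount_mul_t (hw : w ∈ W n) (hn : 1 ≤ n) (h1 : 0 < w 1) :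
    negCount n (w * t) = negCount n w + 1 := by
  have hinsert : ((Icc (1 : ℤ) n).filter fun k => (w * t) k < 0)
      = insert 1 ((Icc (1 : ℤ) n).filter fun k => w k < 0) := by
    ext k
    simp only [mem_filter, mem_insert, mem_Icc, Equiv.Perm.mul_apply, t_apply]
    have := apply_neg_of_mem_W hw 1
    split_ifs with hk <;> subst_vars <;> omega
  rw [negCount, hinsert, card_insert_of_notMem fun h1' => (mem_filter.mp h1').2.not_gt h1, negCount]

lemma lengthB_mul_s_of_lt (hw : w ∈ W n) {j : ℕ} (hj : 1 ≤ j) (hjn : j + 1 ≤ n)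
    (h : w j < w (j + 1)) : lengthB n (w * s j) = lengthB n w + 1 := by
  have hinv := card_inversions_mul (w := w) (s_mem_W hj hjn) (s_mul_self hj) (by
    rw [inversions_s hj hjn]
    simp only [mem_insert, mem_singleton]
    rintro p (rfl | rfl)
    · exact h
    · simp only [apply_neg_of_mem_W hw]
      omega)
  rw [inversions_s hj hjn, card_pair (by rw [Ne, Prod.mk.injEq]; omega)] at hinv
  have h₁ := card_inversions_eq_two_mul_lengthB_add_negCount hw
  have h₂ := card_inversions_eq_two_mul_lengthB_add_negCount (mul_mem hw (s_mem_W hj hjn))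
  rw [negCount_mul_s hj hjn] at h₂
  omega

lemma lengthB_mul_s_of_gt (hw : w ∈ W n) {j : ℕ} (hj : 1 ≤ j) (hjn : j + 1 ≤ n)
    (h : w (j + 1) < w j) : lengthB n w = lengthB n (w * s j) + 1 := by
  have hws : (w * s j) j < (w * s j) (j + 1) := by
    simp only [Equiv.Perm.mul_apply, s_apply hj]
    simpa using h
  simpa [mul_assoc, s_mul_self hj] using
    lengthB_mul_s_of_lt (mul_mem hw (s_mem_W hj hjn)) hj hjn hws

lemma lengthB_mul_t_of_pos (hw : w ∈ W n) (hn : 1 ≤ n) (h : 0 < w 1) :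
    lengthB n (w * t) = lengthB n w + 1 := by
  have hinv := card_inversions_mul (w := w) (t_mem_W hn) t_mul_self (by
    rw [inversions_t hn]
    simp only [mem_insert, mem_singleton]
    have := apply_neg_of_mem_W hw 1
    have := apply_zero_of_mem_W hw
    rintro p (rfl | rfl | rfl) <;> simp only <;> omega)
  rw [inversions_t hn, show #({(-1, 0), (0, 1), (-1, 1)} : Finset (ℤ × ℤ)) = 3 from rfl] at hinv
  have h₁ := card_inversions_eq_two_mul_lengthB_add_negCount hw
  have h₂ := card_inversions_eq_two_mul_lengthB_add_negCount (mul_mem hw (t_mem_W hn))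
  rw [negCount_mul_t hw hn h] at h₂
  omega

lemma lengthB_mul_t_of_neg (hw : w ∈ W n) (hn : 1 ≤ n) (h : w 1 < 0) :
    lengthB n w = lengthB n (w * t) + 1 := by
  have hwt : 0 < (w * t) 1 := by
    rw [Equiv.Perm.mul_apply, t_apply, if_pos rfl, apply_neg_of_mem_W hw]
    omega
  simpa [mul_assoc, t_mul_self] using lengthB_mul_t_of_pos (mul_mem hw (t_mem_W hn)) hn hwt

lemma lengthB_mul_s_lt_iff (hw : w ∈ W n) {j : ℕ} (hj : 1 ≤ j) (hjn : j + 1 ≤ n) :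
    lengthB n (w * s j) < lengthB n w ↔ w (j + 1) < w j := by
  rcases lt_or_gt_of_ne (w.injective.ne (show (j : ℤ) ≠ j + 1 by omega)) with h | h
  · have := lengthB_mul_s_of_lt hw hj hjn h
    constructor <;> intro <;> omega
  · have := lengthB_mul_s_of_gt hw hj hjn h
    exact iff_of_true (by omega) h

lemma lengthB_mul_t_lt_iff (hw : w ∈ W n) (hn : 1 ≤ n) :
    lengthB n (w * t) < lengthB n w ↔ w 1 < 0 := by
  rcases lt_or_gt_of_ne (apply_ne_zero_of_mem_W hw one_ne_zero) with h | h
  · have := lengthB_mul_t_of_neg hw hn h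
    exact iff_of_true (by omega) h
  · have := lengthB_mul_t_of_pos hw hn h
    constructor <;> intro <;> omega

lemma lengthB_mul_le (hw : w ∈ W n) (hn : 1 ≤ n) {g : Equiv.Perm ℤ} (hg : g ∈ gens n) :
    lengthB n (w * g) ≤ lengthB n w + 1 := by
  rcases hg with rfl | ⟨j, hj, hjn, rfl⟩
  · rcases lt_or_gt_of_ne (apply_ne_zero_of_mem_W hw one_ne_zero) with h | h
    · have := lengthB_mul_t_of_neg hw hn h
      omega
    · exact (lengthB_mul_t_of_pos hw hn h).le
  · rcases lt_or_gt_of_ne (w.injective.ne (show (j : ℤ) ≠ j + 1 by omega)) with h | h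
    · exact (lengthB_mul_s_of_lt hw hj hjn h).le
    · have := lengthB_mul_s_of_gt hw hj hjn h
      omega

end Statistics

lemma eq_one_of_no_descent {n : ℕ} {w : Equiv.Perm ℤ} (hw : w ∈ W n) (h1 : 0 < w 1)
    (hmono : ∀ j : ℕ, 1 ≤ j → j + 1 ≤ n → w j < w (j + 1)) : w = 1 := by
  have hup (k : ℕ) (hk : 1 ≤ k) : k ≤ n → (k : ℤ) ≤ w k := by
    induction k, hk using Nat.le_induction with
    | base =>
      intro
      simp only [Nat.cast_one]
      omega
    | succ k hk ih =>
      intro hkn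
      have := hmono k hk hkn
      have := ih (by omega)
      push_cast
      omega
  have hdown (k : ℕ) (hkn : k ≤ n) : 1 ≤ k → w k ≤ k := by
    induction hkn using Nat.decreasingInduction with
    | self =>
      intro hn
      have := mem_Icc.mp (apply_mem_Icc_of_mem_W hw (k := n) (mem_Icc.mpr ⟨by omega, le_rfl⟩))
      omega
    | of_succ k hkn ih =>
      intro hk
      have := hmono k hk hkn
      have := ih (by omega)
      push_cast at this
      omega
  have hpos (k : ℤ) (hk : 0 < k) (hkn : k ≤ n) : w k = k := by
    have := hup k.toNat (by omega) (by omega)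
    have := hdown k.toNat (by omega) (by omega)
    rw [Int.toNat_of_nonneg hk.le] at *
    omega
  ext k
  rw [Equiv.Perm.one_apply]
  rcases lt_trichotomy k 0 with hk | rfl | hk
  · by_cases hkn : (n : ℤ) < -k
    · exact hw.2 k (by rw [abs_of_neg hk]; exact hkn)
    · rw [← neg_neg k, apply_neg_of_mem_W hw, hpos (-k) (by omega) (by omega)]
  · exact apply_zero_of_mem_W hw
  · by_cases hkn : (n : ℤ) < k
    · exact hw.2 k (by rwa [abs_of_pos hk])
    · exact hpos k hk (by omega)

lemma len_eq_of_descent {n : ℕ} (hn : 1 ≤ n) (f : Equiv.Perm ℤ → ℕ) (hf1 : f 1 = 0)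
    (hstep : ∀ w ∈ W n, ∀ g ∈ gens n, f (w * g) ≤ f w + 1)
    (hdesc : ∀ w ∈ W n, w ≠ 1 → ∃ g ∈ gens n, f (w * g) < f w)
    {w : Equiv.Perm ℤ} (hw : w ∈ W n) : len n w = f w := by
  have hlower (l : List (Equiv.Perm ℤ)) (hl : ∀ x ∈ l, x ∈ gens n) : f l.prod ≤ l.length := by
    induction l using List.reverseRecOn with
    | nil => simp [hf1]
    | append_singleton l g ih =>
      have hl' : ∀ x ∈ l, x ∈ gens n := fun x hx => hl x (by simp [hx])
      have := hstep l.prod (list_prod_mem fun x hx => gens_subset_W hn (hl' x hx)) g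
        (hl g (by simp))
      simp only [List.prod_append, List.prod_singleton, List.length_append, List.length_singleton]
      have := ih hl'
      omega
  have hupper (w : Equiv.Perm ℤ) (hw : w ∈ W n) :
      ∃ l : List (Equiv.Perm ℤ), (∀ x ∈ l, x ∈ gens n) ∧ l.prod = w ∧ l.length ≤ f w := by
    induction hk : f w using Nat.strong_induction_on generalizing w with
    | _ k ih =>
      by_cases h1 : w = 1
      · exact ⟨[], by simp, by simp [h1], by simp⟩
      obtain ⟨g, hg, hlt⟩ := hdesc w hw h1
      obtain ⟨l, hl, hprod, hlen⟩ :=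
        ih _ (hk ▸ hlt) (w * g) (mul_mem hw (gens_subset_W hn hg)) rfl
      refine ⟨l ++ [g], ?_, ?_, ?_⟩
      · simpa [or_imp, forall_and] using ⟨hl, hg⟩
      · rw [List.prod_append, List.prod_singleton, hprod, mul_assoc, mul_self_of_mem_gens hg,
          mul_one]
      · simp only [List.length_append, List.length_singleton]
        omega
  obtain ⟨l, hl, hprod, hlen⟩ := hupper w hw
  have hle : len n w ≤ l.length := Nat.sInf_le ⟨l, hl, hprod, rfl⟩
  obtain ⟨l', hl', hprod', hlen'⟩ : ∃ l' : List (Equiv.Perm ℤ),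
      (∀ x ∈ l', x ∈ gens n) ∧ l'.prod = w ∧ l'.length = len n w :=
    Nat.sInf_mem (s := {k | ∃ l : List (Equiv.Perm ℤ), (∀ x ∈ l, x ∈ gens n) ∧ l.prod = w ∧
      l.length = k}) ⟨_, l, hl, hprod, rfl⟩
  have := hlower l' hl'
  rw [hprod'] at this
  omega

lemma len_eq_lengthB {n : ℕ} (hn : 1 ≤ n) {w : Equiv.Perm ℤ} (hw : w ∈ W n) :
    len n w = lengthB n w := by
  refine len_eq_of_descent hn (lengthB n) lengthB_one (fun w hw g hg => lengthB_mul_le hw hn hg)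
    (fun w hw hw1 => ?_) hw
  by_contra! hnone
  refine hw1 (eq_one_of_no_descent hw ?_ fun j hj hjn => ?_)
  · have := hnone t (Or.inl rfl)
    rw [← not_lt, lengthB_mul_t_lt_iff hw hn] at this
    exact lt_of_le_of_ne (not_lt.mp this) (apply_ne_zero_of_mem_W hw one_ne_zero).symm
  · have := hnone (s j) (Or.inr ⟨j, hj, hjn, rfl⟩)
    rw [← not_lt, lengthB_mul_s_lt_iff hw hj hjn] at this
    exact lt_of_le_of_ne (not_lt.mp this) (w.injective.ne (by omega))

lemma len_mul_s_lt_iff {n j : ℕ} {w : Equiv.Perm ℤ} (hw : w ∈ W n) (hj : 1 ≤ j)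
    (hjn : j + 1 ≤ n) : len n (w * s j) < len n w ↔ w (j + 1) < w j := by
  rw [len_eq_lengthB (by omega) hw, len_eq_lengthB (by omega) (mul_mem hw (s_mem_W hj hjn)),
    lengthB_mul_s_lt_iff hw hj hjn]

lemma t_mul_apply_lt_iff {n : ℕ} {w : Equiv.Perm ℤ} (hw : w ∈ W n) {k : ℤ} (hk : 1 ≤ k) :
    (t * w) (k + 1) < (t * w) k ↔ w (k + 1) < w k := by
  have := w.injective.ne (show k ≠ k + 1 by omega)
  have := apply_ne_neg_apply_of_mem_W hw (show k + 1 ≠ -k by omega)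
  have := apply_ne_zero_of_mem_W hw (show k ≠ 0 by omega)
  have := apply_ne_zero_of_mem_W hw (show k + 1 ≠ 0 by omega)
  simp only [Equiv.Perm.mul_apply, t_apply]
  split_ifs <;> omega

lemma len_t_mul_mul_s_lt_iff {n j : ℕ} {w : Equiv.Perm ℤ} (hw : w ∈ W n) (hj : 1 ≤ j)
    (hjn : j + 1 ≤ n) : len n (t * w * s j) < len n (t * w) ↔ len n (w * s j) < len n w := by
  rw [len_mul_s_lt_iff (mul_mem (t_mem_W (by omega)) hw) hj hjn, len_mul_s_lt_iff hw hj hjn]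
  exact t_mul_apply_lt_iff hw (by exact_mod_cast hj)

lemma mem_Dset_t_mul_iff {n i : ℕ} {w : Equiv.Perm ℤ} (hw : w ∈ W n) (hi : 1 ≤ i)
    (hin : i + 2 ≤ n) : t * w ∈ Dset n i ↔ w ∈ Dset n i := by
  simp only [Dset, Set.mem_ofPred_eq, len_t_mul_mul_s_lt_iff hw hi (by omega),
    len_t_mul_mul_s_lt_iff hw (j := i + 1) (by omega) (by omega)]

/-- for `x ∈ W_n` and `1 ≤ i ≤ n-2`, `x ∈ D_i(W_n)` iff
`t x ∈ D_i(W_n)`, in which case `γ_i (t x) = t γ_i x`. -/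
theorem stmt11 (n : ℕ) (x : Equiv.Perm ℤ) (hx : x ∈ W n)
    (i : ℕ) (hi1 : 1 ≤ i) (hi2 : i + 2 ≤ n) :
    (x ∈ Dset n i ↔ t * x ∈ Dset n i) ∧
    (x ∈ Dset n i → gamma n i (t * x) = t * gamma n i x) := by
  refine ⟨(mem_Dset_t_mul_iff hx hi1 hi2).symm, fun _ => ?_⟩
  have hxs := mem_Dset_t_mul_iff (mul_mem hx (s_mem_W hi1 (by omega))) hi1 hi2
  unfold gamma
  rw [mul_assoc t x (s i), mul_assoc t x (s (i + 1))]
  by_cases hc : x * s i ∈ Dset n i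
  · rw [if_pos (hxs.mpr hc), if_pos hc]
  · rw [if_neg (mt hxs.mp hc), if_neg hc]

end TypeB
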